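/- arXiv:1711.00167 — 3 statements merged into one kernel-verified Lean document; each statement's English description precedes it below -/
import Mathlib

section
/- The cutwidth of a complete binary tree on N = 2^h - 1 nodes is at most h - 1 (and in particular at most log₂ N). -/
/-- The cut of a vertex set `S`: the number of edges of `G` with exactly one endpoint
in `S` (counted as crossing pairs oriented from `S` to its complement). -/
noncomputable def cutOf {V : Type*} (G : SimpleGraph V) (S : Set V) : ℕ :=
  {p : V × V | G.Adj p.1 p.2 ∧ p.1 ∈ S ∧ p.2 ∉ S}.ncard

/-- The cutwidth of a finite graph: the minimum over vertex orderings (crusades,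
i.e. sequences of prefix sets each obtained by adding one vertex) of the maximum
cut of a prefix set. -/
noncomputable def cutwidth {V : Type*} [Fintype V] (G : SimpleGraph V) : ℕ :=
  sInf {w : ℕ | ∃ σ : Fin (Fintype.card V) ≃ V,
    ∀ k : ℕ, cutOf G {v | ∃ j : Fin (Fintype.card V), (j : ℕ) < k ∧ σ j = v} ≤ w}

/-- The complete binary tree on `2^h - 1` nodes, in heap indexing: node `i` has
children `2i+1` and `2i+2`. -/
def btree (h : ℕ) : SimpleGraph (Fin (2^h - 1)) :=
  SimpleGraph.fromRel (fun i j => (j : ℕ) = 2*(i : ℕ) + 1 ∨ (j : ℕ) = 2*(i : ℕ) + 2)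

/-!
Lay the tree out in in-order, a depth-first order. Numbering the positions `1, …, 2^h - 1`, a
node at depth `d` sits at an odd multiple of `2^(h-1-d)` and its children sit `2^(h-2-d)` to its
left and right. So every edge joins the two ends of a dyadic interval `[j 2^t, (j+1) 2^t]` with
`t < h - 1`. For each `t`, only the dyadic interval of length `2^t` containing `k + 1/2` can
straddle the prefix `{1, …, k}`, so at most `h - 1` edges cross it.
-/

open Function Set

theorem cutwidth_le_of_equiv {V : Type*} [Fintype V] (G : SimpleGraph V) {n : ℕ} (e : V ≃ Fin n)
    {w : ℕ} (he : ∀ k, cutOf G {v | (e v : ℕ) < k} ≤ w) : cutwidth G ≤ w := by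
  have hn : Fintype.card V = n := by simpa using Fintype.card_congr e
  refine Nat.sInf_le ⟨(finCongr hn).trans e.symm, fun k => ?_⟩
  convert he k using 2
  ext v
  constructor
  · rintro ⟨j, hj, rfl⟩
    simpa using hj
  · intro hv
    exact ⟨finCongr hn.symm (e v), by simpa using hv, by simp⟩

def IsDyadicEdge (m a b : ℕ) : Prop := ∃ t < m, 2 ^ t ∣ a ∧ b = a + 2 ^ t

theorem Nat.eq_div_mul_of_dvd_of_le_of_lt_add {a k E : ℕ} (hE : E ∣ a) (hak : a ≤ k)
    (hk : k < a + E) : a = k / E * E := by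
  obtain ⟨c, rfl⟩ := hE
  rw [Nat.div_eq_of_lt_le (k := c) (by linarith [mul_comm c E]) (by linarith [mul_comm c E]),
    mul_comm]

theorem cutOf_le_of_isDyadicEdge {V : Type*} (G : SimpleGraph V) {f : V → ℕ} (hf : Injective f)
    {m : ℕ} (hG : ∀ u v, G.Adj u v → f u < f v → IsDyadicEdge m (f u) (f v)) (k : ℕ) :
    cutOf G {v | f v ≤ k} ≤ m := by
  set crossing := {p : V × V | G.Adj p.1 p.2 ∧ p.1 ∈ {v | f v ≤ k} ∧ p.2 ∉ {v | f v ≤ k}}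
  have hcrossing : ∀ p ∈ crossing,
      ∃ t < m, f p.1 = k / 2 ^ t * 2 ^ t ∧ f p.2 = f p.1 + 2 ^ t := by
    rintro ⟨u, v⟩ ⟨huv, hu, hv⟩
    simp only [mem_ofPred_eq, not_le] at hu hv
    obtain ⟨t, ht, hdvd, hfv⟩ := hG u v huv (by omega)
    exact ⟨t, ht, Nat.eq_div_mul_of_dvd_of_le_of_lt_add hdvd hu (hfv ▸ hv), hfv⟩
  -- a crossing edge is determined by the length `f p.2 - f p.1` of its dyadic interval
  calc crossing.ncard ≤ ((2 ^ ·) '' Iio m).ncard := by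
        refine ncard_le_ncard_of_injOn (fun p => f p.2 - f p.1) ?_ ?_ ((finite_Iio m).image _)
        · intro p hp
          obtain ⟨t, ht, -, hp2⟩ := hcrossing p hp
          exact ⟨t, ht, by simp [hp2]⟩
        · intro p hp q hq hpq
          obtain ⟨t, -, hp1, hp2⟩ := hcrossing p hp
          obtain ⟨s, -, hq1, hq2⟩ := hcrossing q hq
          have hts : 2 ^ t = 2 ^ s := by simpa [hp2, hq2] using hpq
          have h1 : f p.1 = f q.1 := by rw [hp1, hq1, hts]
          exact Prod.ext (hf h1) (hf (by rw [hp2, hq2, h1, hts]))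
    _ ≤ (Iio m).ncard := ncard_image_le (finite_Iio m)
    _ = m := by simp

namespace BinaryHeap

open Nat (log)

/-- Heap indices are 1-based here (node `v` of `btree h` is `n = v + 1`, with children `2n` and
`2n + 1`). Node `n` has depth `log 2 n` and offset `n - 2 ^ log 2 n` in its level, and in-order
the nodes of depth `d` sit at the midpoints of the blocks of length `2^(h-d)` tiling
`[0, 2^h)`. -/
def inorderRank (h n : ℕ) : ℕ := 2 ^ (h - 1 - log 2 n) * (2 * (n - 2 ^ log 2 n) + 1)

theorem log_two_two_mul_add {n r : ℕ} (hn : n ≠ 0) (hr : r < 2) :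
    log 2 (2 * n + r) = log 2 n + 1 := by
  have hlo := Nat.pow_log_le_self 2 hn
  have hhi := Nat.lt_pow_succ_log_self Nat.one_lt_two n
  rw [Nat.log_eq_iff (Or.inl (by omega)), pow_succ, pow_succ]
  rw [pow_succ] at hhi
  omega

theorem two_pow_mul_odd_inj {e e' a a' : ℕ} (h : 2 ^ e * (2 * a + 1) = 2 ^ e' * (2 * a' + 1)) :
    e = e' ∧ a = a' := by
  have hval (e a : ℕ) : padicValNat 2 (2 ^ e * (2 * a + 1)) = e := by
    rw [padicValNat.mul (by positivity) (by omega), padicValNat.prime_pow,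
      padicValNat.eq_zero_of_not_dvd (by omega), add_zero]
  obtain rfl : e = e' := by rw [← hval e a, h, hval]
  exact ⟨rfl, by have := Nat.eq_of_mul_eq_mul_left (by positivity) h; omega⟩

theorem inorderRank_mem_Ico {h n : ℕ} (hn : n ∈ Ico 1 (2 ^ h)) :
    inorderRank h n ∈ Ico 1 (2 ^ h) := by
  obtain ⟨hn1, hn2⟩ := hn
  have hd : log 2 n < h := Nat.log_lt_of_lt_pow (by omega) hn2
  have hhi := Nat.lt_pow_succ_log_self Nat.one_lt_two n
  rw [pow_succ] at hhi
  have hsplit : 2 ^ h = 2 ^ (h - 1 - log 2 n) * (2 ^ log 2 n * 2) := by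
    rw [← pow_succ, ← pow_add]; congr 1; omega
  refine ⟨Nat.one_le_iff_ne_zero.mpr (by unfold inorderRank; positivity), ?_⟩
  rw [hsplit, inorderRank]
  exact Nat.mul_lt_mul_of_pos_left (by omega) (by positivity)

theorem inorderRank_injOn (h : ℕ) : InjOn (inorderRank h) (Ico 1 (2 ^ h)) := by
  intro n ⟨hn1, hn2⟩ n' ⟨hn1', hn2'⟩ heq
  obtain ⟨hexp, hoff⟩ := two_pow_mul_odd_inj heq
  have hd : log 2 n < h := Nat.log_lt_of_lt_pow (by omega) hn2
  have hd' : log 2 n' < h := Nat.log_lt_of_lt_pow (by omega) hn2'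
  have hlog : log 2 n = log 2 n' := by omega
  have hlo := Nat.pow_log_le_self 2 (by omega : n ≠ 0)
  have hlo' := Nat.pow_log_le_self 2 (by omega : n' ≠ 0)
  rw [hlog] at hoff hlo
  omega

theorem isDyadicEdge_inorderRank_child {h n r : ℕ} (hn : n ≠ 0) (hr : r < 2)
    (hc : 2 * n + r < 2 ^ h) :
    IsDyadicEdge (h - 1) (min (inorderRank h n) (inorderRank h (2 * n + r)))
      (max (inorderRank h n) (inorderRank h (2 * n + r))) := by
  have hd : log 2 n + 1 < h := log_two_two_mul_add hn hr ▸ Nat.log_lt_of_lt_pow (by omega) hc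
  have hlo := Nat.pow_log_le_self 2 hn
  set E := 2 ^ (h - 2 - log 2 n)
  set a := n - 2 ^ log 2 n
  have hparent : inorderRank h n = E * (4 * a + 2) := by
    rw [inorderRank, show h - 1 - log 2 n = h - 2 - log 2 n + 1 by omega, pow_succ]
    ring
  have hchild : inorderRank h (2 * n + r) = E * (4 * a + 2 * r + 1) := by
    rw [inorderRank, log_two_two_mul_add hn hr,
      show h - 1 - (log 2 n + 1) = h - 2 - log 2 n by omega, pow_succ,
      show 2 * n + r - 2 ^ log 2 n * 2 = 2 * a + r by omega]
    ring
  refine ⟨h - 2 - log 2 n, by omega, ?_⟩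
  rw [hparent, hchild]
  interval_cases r
  · rw [min_eq_right (Nat.mul_le_mul_left _ (by omega)),
      max_eq_left (Nat.mul_le_mul_left _ (by omega))]
    exact ⟨dvd_mul_right _ _, by ring⟩
  · rw [min_eq_left (Nat.mul_le_mul_left _ (by omega)),
      max_eq_right (Nat.mul_le_mul_left _ (by omega))]
    exact ⟨dvd_mul_right _ _, by ring⟩

theorem isDyadicEdge_of_btree_adj {h : ℕ} {u v : Fin (2 ^ h - 1)} (huv : (btree h).Adj u v)
    (hlt : inorderRank h (u + 1) < inorderRank h (v + 1)) :
    IsDyadicEdge (h - 1) (inorderRank h (u + 1)) (inorderRank h (v + 1)) := by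
  have hchild {p c : Fin (2 ^ h - 1)} (hpc : (c : ℕ) = 2 * p + 1 ∨ (c : ℕ) = 2 * p + 2) :
      IsDyadicEdge (h - 1) (min (inorderRank h (p + 1)) (inorderRank h (c + 1)))
        (max (inorderRank h (p + 1)) (inorderRank h (c + 1))) := by
    obtain ⟨r, hr, hc⟩ : ∃ r < 2, (c : ℕ) + 1 = 2 * (p + 1) + r :=
      ⟨c - (2 * p + 1), by omega, by omega⟩
    have hcle := c.isLt
    rw [hc]
    exact isDyadicEdge_inorderRank_child (by omega) hr (by omega)
  have hedge : IsDyadicEdge (h - 1) (min (inorderRank h (u + 1)) (inorderRank h (v + 1)))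
      (max (inorderRank h (u + 1)) (inorderRank h (v + 1))) := by
    rw [btree, SimpleGraph.fromRel_adj] at huv
    rcases huv.2 with hv | hu
    · exact hchild hv
    · simpa only [min_comm, max_comm] using hchild hu
  rwa [min_eq_left hlt.le, max_eq_right hlt.le] at hedge

end BinaryHeap

open BinaryHeap in
theorem stmt5_general (h : ℕ) : cutwidth (btree h) ≤ h - 1 := by
  set rank : Fin (2 ^ h - 1) → ℕ := fun v => inorderRank h (v + 1)
  have hrank (v : Fin (2 ^ h - 1)) : rank v ∈ Ico 1 (2 ^ h) :=
    inorderRank_mem_Ico ⟨by omega, by omega⟩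
  have hinj : Injective rank := fun u v huv =>
    Fin.ext (by simpa using inorderRank_injOn h ⟨by omega, by omega⟩ ⟨by omega, by omega⟩ huv)
  let pos (v : Fin (2 ^ h - 1)) : Fin (2 ^ h - 1) := ⟨rank v - 1, by grind [hrank v]⟩
  have hpos : Injective pos := fun u v huv => hinj (by grind [hrank u, hrank v])
  refine cutwidth_le_of_equiv _ (Equiv.ofBijective pos (Finite.injective_iff_bijective.mp hpos))
    fun k => ?_
  convert cutOf_le_of_isDyadicEdge _ hinj (fun _ _ => isDyadicEdge_of_btree_adj) k using 2
  ext v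
  grind [hrank v]

/-- The cutwidth of the complete binary tree on `N = 2^h - 1` nodes is at most `h - 1`
(in particular at most `log₂ N`). -/
theorem stmt5 (h : ℕ) (hh : 1 ≤ h) : cutwidth (btree h) ≤ h - 1 :=
  stmt5_general h
end

section
/- Let T be a complete binary tree on N nodes, and let r ≥ 2. If S is a set of N/(2r^4) vertices of T whose cut (number of edges between S and its complement) is at most r^4, then S contains a vertex at distance at most 9·log₂(r) from the root. -/
namespace HeapTree

/-- The ancestor of `n` at depth `d`. Nodes are numbered from `1` in heap order (node `n` has
children `2n` and `2n+1`), so `Nat.log 2 n` is the depth of `n`; vertex `v` of `btree h` is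
node `v + 1`. -/
def ancestor (d n : ℕ) : ℕ := n / 2 ^ (Nat.log 2 n - d)

/-- The heap number of `n` inside the subtree rooted at `ancestor d n`. -/
def subtreeIndex (d n : ℕ) : ℕ := n % 2 ^ (Nat.log 2 n - d) + 2 ^ (Nat.log 2 n - d)

lemma log_subtreeIndex (d n : ℕ) : Nat.log 2 (subtreeIndex d n) = Nat.log 2 n - d := by
  have := Nat.mod_lt n (pow_pos two_pos (Nat.log 2 n - d))
  exact Nat.log_eq_of_pow_le_of_lt_pow (by unfold subtreeIndex; omega)
    (by unfold subtreeIndex; rw [pow_succ]; omega)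

lemma ancestor_subtreeIndex_injective (d : ℕ) :
    Function.Injective fun n => (ancestor d n, subtreeIndex d n) := by
  intro n m hnm
  obtain ⟨hanc, hidx⟩ := Prod.mk.inj hnm
  have hk : Nat.log 2 n - d = Nat.log 2 m - d := by
    rw [← log_subtreeIndex d n, ← log_subtreeIndex d m, hidx]
  unfold ancestor at hanc
  unfold subtreeIndex at hidx
  rw [hk] at hanc hidx
  calc n = 2 ^ (Nat.log 2 m - d) * (n / 2 ^ (Nat.log 2 m - d)) + n % 2 ^ (Nat.log 2 m - d) :=
        (Nat.div_add_mod _ _).symm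
    _ = 2 ^ (Nat.log 2 m - d) * (m / 2 ^ (Nat.log 2 m - d)) + m % 2 ^ (Nat.log 2 m - d) := by
        rw [hanc, Nat.add_right_cancel hidx]
    _ = m := Nat.div_add_mod _ _

lemma subtreeIndex_mem_Ico {d h n : ℕ} (hd : d ≤ Nat.log 2 n) (hh : Nat.log 2 n < h) :
    subtreeIndex d n ∈ Finset.Ico 1 (2 ^ (h - d)) := by
  have hpos : 0 < subtreeIndex d n := by unfold subtreeIndex; positivity
  exact Finset.mem_Ico.2
    ⟨hpos, Nat.lt_pow_of_log_lt one_lt_two (by rw [log_subtreeIndex]; omega)⟩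

lemma ancestor_div_two {d n : ℕ} (hd : d < Nat.log 2 n) : ancestor d (n / 2) = ancestor d n := by
  unfold ancestor
  rw [Nat.log_div_base, Nat.div_div_eq_div_mul, ← pow_succ']
  congr 2
  omega

end HeapTree

section BinaryTree

open HeapTree

variable {h d : ℕ} {S : Set (Fin (2 ^ h - 1))}

lemma btree_depth_lt (v : Fin (2 ^ h - 1)) : Nat.log 2 (v + 1) < h :=
  Nat.log_lt_of_lt_pow (Nat.succ_ne_zero _) (by omega)

lemma btree_adj_of_parent {v w : Fin (2 ^ h - 1)} (hv : 2 ≤ (v : ℕ) + 1)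
    (hw : (w : ℕ) + 1 = ((v : ℕ) + 1) / 2) : (btree h).Adj v w := by
  rw [btree, SimpleGraph.fromRel_adj]
  exact ⟨Fin.ne_of_val_ne (by omega), Or.inr (by omega)⟩

lemma ncard_le_mul_ncard_image_ancestor (hS : ∀ v ∈ S, d ≤ Nat.log 2 (v + 1)) :
    S.ncard ≤ (2 ^ (h - d) - 1) * ((fun v : Fin (2 ^ h - 1) => ancestor d (v + 1)) '' S).ncard := by
  set A := (fun v : Fin (2 ^ h - 1) => ancestor d (v + 1)) '' S
  calc S.ncard ≤ (A ×ˢ (Finset.Ico 1 (2 ^ (h - d)) : Set ℕ)).ncard := by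
        refine Set.ncard_le_ncard_of_injOn (fun v => (ancestor d (v + 1), subtreeIndex d (v + 1)))
          (fun v hv => ⟨Set.mem_image_of_mem _ hv, subtreeIndex_mem_Ico (hS v hv) (btree_depth_lt v)⟩)
          (fun v _ w _ hvw => Fin.ext ?_) ((S.toFinite.image _).prod (Finset.finite_toSet _))
        simpa using ancestor_subtreeIndex_injective d hvw
    _ = (2 ^ (h - d) - 1) * A.ncard := by
        rw [Set.ncard_prod, Set.ncard_coe_finset, Nat.card_Ico, mul_comm]

lemma exists_cut_pair_ancestor_eq (hd : 0 < d) (hS : ∀ v ∈ S, d ≤ Nat.log 2 (v + 1))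
    {v : Fin (2 ^ h - 1)} (hv : v ∈ S) :
    ∃ p ∈ {p : Fin (2 ^ h - 1) × Fin (2 ^ h - 1) | (btree h).Adj p.1 p.2 ∧ p.1 ∈ S ∧ p.2 ∉ S},
      ancestor d (p.1 + 1) = ancestor d (v + 1) := by
  obtain ⟨u, ⟨huS, hut⟩, hmin⟩ := wellFounded_lt.has_min
    {u : Fin (2 ^ h - 1) | u ∈ S ∧ ancestor d (u + 1) = ancestor d (v + 1)} ⟨v, hv, rfl⟩
  have hu : 2 ≤ (u : ℕ) + 1 := by
    by_contra! hu
    have := hS u huS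
    rw [Nat.log_of_lt hu] at this
    omega
  let p : Fin (2 ^ h - 1) := ⟨((u : ℕ) + 1) / 2 - 1, by omega⟩
  have hp : (p : ℕ) + 1 = ((u : ℕ) + 1) / 2 := by simp only [p]; omega
  refine ⟨(u, p), ⟨btree_adj_of_parent hu hp, huS, fun hpS => ?_⟩, hut⟩
  -- a parent in `S` would lie in the same group as `u`, with a smaller index
  have hdu : d < Nat.log 2 ((u : ℕ) + 1) := by
    have := hS p hpS
    rw [hp, Nat.log_div_base] at this
    omega
  exact hmin p ⟨hpS, by rw [hp, ancestor_div_two hdu, hut]⟩ (Fin.lt_def.2 (by omega))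

lemma ncard_image_ancestor_le_cutOf (hd : 0 < d) (hS : ∀ v ∈ S, d ≤ Nat.log 2 (v + 1)) :
    ((fun v : Fin (2 ^ h - 1) => ancestor d (v + 1)) '' S).ncard ≤ cutOf (btree h) S :=
  calc _ ≤ ((fun p : Fin (2 ^ h - 1) × Fin (2 ^ h - 1) => ancestor d (p.1 + 1)) ''
          {p | (btree h).Adj p.1 p.2 ∧ p.1 ∈ S ∧ p.2 ∉ S}).ncard :=
        Set.ncard_le_ncard (by rintro _ ⟨v, hv, rfl⟩; exact exists_cut_pair_ancestor_eq hd hS hv)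
          (Set.toFinite _)
    _ ≤ cutOf (btree h) S := Set.ncard_image_le (Set.toFinite _)

end BinaryTree

lemma mul_lt_div_of_pow_lt {r d h : ℕ} (hr : 2 ≤ r) (hrd : r ^ 9 < 2 ^ d) (hdh : d ≤ h) :
    (2 ^ (h - d) - 1) * r ^ 4 < (2 ^ h - 1) / (2 * r ^ 4) := by
  obtain ⟨y, hy⟩ : ∃ y, 2 ^ (h - d) = y + 1 := ⟨_, (Nat.succ_pred_eq_of_pos (by positivity)).symm⟩
  have hh : 2 ^ h = 2 ^ d * (y + 1) := by rw [← hy, ← pow_add, Nat.add_sub_cancel' hdh]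
  have h8 : 2 * r ^ 8 ≤ r ^ 9 := by rw [pow_succ r 8, mul_comm]; exact Nat.mul_le_mul_left _ hr
  have h4 : r ^ 4 ≤ r ^ 8 := Nat.pow_le_pow_right (by omega) (by norm_num)
  have hlt : (y * r ^ 4 + 1) * (2 * r ^ 4) < 2 ^ h :=
    calc (y * r ^ 4 + 1) * (2 * r ^ 4) = 2 * r ^ 8 * y + 2 * r ^ 4 := by ring
      _ < (r ^ 9 + 1) * (y + 1) := by nlinarith
      _ ≤ 2 ^ h := hh ▸ Nat.mul_le_mul_right _ hrd
  rw [hy, Nat.add_sub_cancel, Nat.lt_iff_add_one_le, Nat.le_div_iff_mul_le (by positivity)]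
  omega

theorem stmt6_general (h r : ℕ) (hr : 2 ≤ r)
    (hh : 9 * Real.logb 2 r + 1 ≤ h)
    (S : Set (Fin (2^h - 1)))
    (hcard : S.ncard = (2^h - 1) / (2 * r^4))
    (hcut : cutOf (btree h) S ≤ r^4) :
    ∃ v ∈ S, (Nat.log 2 ((v : ℕ) + 1) : ℝ) ≤ 9 * Real.logb 2 r := by
  by_contra! hdeep
  obtain ⟨d, hd⟩ : ∃ d, d = Nat.log 2 (r ^ 9) + 1 := ⟨_, rfl⟩
  have hlogb : 9 * Real.logb 2 r = Real.logb (2 : ℕ) (r ^ 9 : ℕ) := by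
    push_cast
    rw [Real.logb_pow]
    norm_num
  have hnonneg : 0 ≤ 9 * Real.logb 2 r :=
    mul_nonneg (by norm_num) (Real.logb_nonneg one_lt_two (by exact_mod_cast (by omega : 1 ≤ r)))
  have hS : ∀ v ∈ S, d ≤ Nat.log 2 (v + 1) := fun v hv => by
    have := (Nat.floor_lt hnonneg).2 (hdeep v hv)
    rw [hlogb, Real.natFloor_logb_natCast] at this
    omega
  have hdh : d ≤ h := by
    have := Real.natLog_le_logb (r ^ 9) 2
    rw [← hlogb] at this
    exact_mod_cast (show (d : ℝ) ≤ h by rw [hd]; push_cast; linarith)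
  have hcount := (ncard_le_mul_ncard_image_ancestor hS).trans
    (Nat.mul_le_mul_left _ ((ncard_image_ancestor_le_cutOf (by omega) hS).trans hcut))
  have hlt := mul_lt_div_of_pow_lt hr (hd ▸ Nat.lt_pow_succ_log_self one_lt_two _) hdh
  rw [hcard] at hcount
  exact hlt.not_ge hcount

/-- If `S` is a set of `N/(2r^4)` vertices of the complete binary tree on `N = 2^h - 1`
nodes whose cut is at most `r^4`, then `S` contains a vertex at distance at most
`9·log₂ r` from the root. -/
theorem stmt6 (h r : ℕ) (hr : 2 ≤ r)
    (hh : 9 * Real.logb 2 r + 1 ≤ h) (hbig : 2 * r^9 ≤ 2^h - 1)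
    (S : Set (Fin (2^h - 1)))
    (hcard : S.ncard = (2^h - 1) / (2 * r^4))
    (hcut : cutOf (btree h) S ≤ r^4) :
    ∃ v ∈ S, (Nat.log 2 ((v : ℕ) + 1) : ℝ) ≤ 9 * Real.logb 2 r :=
  stmt6_general h r hr hh S hcard hcut
end

section
/- Wald's identity corollary: let X_1, X_2, ... be i.i.d. real random variables with E[X] < 0, let γ(s) = log E[e^{sX}] be the log-MGF, and suppose there exists s* > 0 with γ(s*) = 0. Let S_n = X_1 + ... + X_n, fix ε > 0 and β < 0, and let J be the first n with S_n ≥ ε or S_n ≤ β. Then P(S_J ≥ ε) ≤ e^{-s*·ε}. -/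
open MeasureTheory ProbabilityTheory Finset

/-! Since `E[e^{sX}] = 1`, the products `e^{s Sₙ} = ∏ e^{s Xᵢ}` of independent mean-one factors
form a nonnegative martingale of mean one. By Ville's inequality (Doob's maximal inequality with
`n → ∞`), the probability that it ever reaches `e^{sε}`, i.e. that the walk ever reaches `ε`, is
at most `e^{-sε}`; the event `S_J ≥ ε` is contained in this one whatever the index `J`. -/

namespace ProbabilityTheory

variable {Ω : Type*} {mΩ : MeasurableSpace Ω} {μ : Measure Ω} {Y : ℕ → Ω → ℝ}

theorem iIndepFun.integrable_prod_range (hind : iIndepFun Y μ) (hmeas : ∀ i, Measurable (Y i))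
    (hint : ∀ i, Integrable (Y i) μ) (n : ℕ) : Integrable (∏ i ∈ range n, Y i) μ := by
  have := hind.isProbabilityMeasure
  induction n with
  | zero => exact integrable_const (1 : ℝ)
  | succ n ih =>
    rw [prod_range_succ]
    exact (hind.indepFun_prod_range_succ hmeas n).integrable_mul ih (hint n)

theorem iIndepFun.martingale_prod_range_succ (hind : iIndepFun Y μ)
    (hY : ∀ i, StronglyMeasurable (Y i)) (hmean : ∀ i, μ[Y i] = 1) :
    Martingale (fun n ↦ ∏ i ∈ range (n + 1), Y i) (Filtration.natural Y hY) μ := by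
  have := hind.isProbabilityMeasure
  have hint i : Integrable (Y i) μ := .of_integral_ne_zero (by simp [hmean])
  have hadapted : StronglyAdapted (Filtration.natural Y hY) fun n ↦ ∏ i ∈ range (n + 1), Y i :=
    fun n ↦ Finset.stronglyMeasurable_prod _ fun i hi ↦
      (Filtration.stronglyAdapted_natural hY).stronglyMeasurable_le
        (Nat.lt_succ_iff.mp (mem_range.mp hi))
  have hprod := hind.integrable_prod_range (fun i ↦ (hY i).measurable) hint
  refine martingale_nat hadapted (fun n ↦ hprod _) fun n ↦ ?_
  have hsucc : ∏ i ∈ range (n + 1 + 1), Y i = (∏ i ∈ range (n + 1), Y i) * Y (n + 1) :=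
    prod_range_succ _ _
  filter_upwards [condExp_mul_of_stronglyMeasurable_left (hadapted n) (hsucc ▸ hprod (n + 2))
    (hint (n + 1)), hind.condExp_natural_ae_eq_of_lt hY n.lt_succ_self] with ω h1 h2
  rw [hsucc, h1, Pi.mul_apply, h2, hmean, mul_one]

end ProbabilityTheory

namespace MeasureTheory

variable {Ω : Type*} {mΩ : MeasurableSpace Ω} {μ : Measure Ω} [IsFiniteMeasure μ]
  {𝒢 : Filtration ℕ mΩ} {f : ℕ → Ω → ℝ}

theorem Martingale.measureReal_exists_le_le (hf : Martingale f 𝒢 μ) (hnonneg : 0 ≤ f) {c : ℝ}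
    (hc : 0 < c) : μ.real {ω | ∃ n, c ≤ f n ω} ≤ μ[f 0] / c := by
  set A : ℕ → Set Ω := fun n ↦ {ω | c ≤ (range (n + 1)).sup' nonempty_range_add_one fun k ↦ f k ω}
  have hA : ∀ n, μ.real (A n) ≤ μ[f 0] / c := by
    intro n
    lift c to NNReal using hc.le
    have hmax := maximal_ineq hf.submartingale hnonneg (ε := c) n
    rw [← ENNReal.ofReal_coe_nnreal, ← ofReal_measureReal, ← ENNReal.ofReal_mul c.coe_nonneg,
      ENNReal.ofReal_le_ofReal_iff (integral_nonneg fun ω ↦ hnonneg n ω)] at hmax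
    have hmean : μ[f n] = μ[f 0] := by
      simpa using (hf.setIntegral_eq n.zero_le MeasurableSet.univ).symm
    rw [le_div_iff₀ hc, mul_comm, ← hmean]
    exact hmax.trans (setIntegral_le_integral (hf.integrable n)
      (Filter.Eventually.of_forall (hnonneg n)))
  have hunion : {ω | ∃ n, c ≤ f n ω} = ⋃ n, A n := by
    ext ω
    simp only [A, Set.mem_ofPred_eq, Set.mem_iUnion, le_sup'_iff, mem_range]
    exact ⟨fun ⟨n, hn⟩ ↦ ⟨n, n, n.lt_succ_self, hn⟩, fun ⟨_, k, _, hk⟩ ↦ ⟨k, hk⟩⟩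
  have hmono : Monotone A := fun m n hmn ω (hω : c ≤ _) ↦
    hω.trans (sup'_mono _ (range_subset_range.mpr (Nat.succ_le_succ hmn)) _)
  rw [hunion, measureReal_def]
  refine ENNReal.toReal_le_of_le_ofReal (div_nonneg (integral_nonneg (hnonneg 0)) hc.le) ?_
  rw [hmono.measure_iUnion]
  exact iSup_le fun n ↦ (ENNReal.le_ofReal_iff_toReal_le (measure_ne_top _ _)
    (div_nonneg (integral_nonneg (hnonneg 0)) hc.le)).mpr (hA n)

end MeasureTheory

namespace ProbabilityTheory

theorem iIndepFun.measureReal_exists_le_sum_range_le_exp {Ω : Type*} {mΩ : MeasurableSpace Ω}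
    {P : Measure Ω} {X : ℕ → Ω → ℝ} (hmeas : ∀ i, Measurable (X i)) (hind : iIndepFun X P)
    {s : ℝ} (hs : 0 < s) (hmgf : ∀ i, ∫ ω, Real.exp (s * X i ω) ∂P = 1) {ε : ℝ} (hε : 0 < ε) :
    P.real {ω | ∃ n, ε ≤ ∑ i ∈ range n, X i ω} ≤ Real.exp (-(s * ε)) := by
  have := hind.isProbabilityMeasure
  set Y : ℕ → Ω → ℝ := fun i ω ↦ Real.exp (s * X i ω)
  have hY i : StronglyMeasurable (Y i) :=
    (Real.measurable_exp.comp ((hmeas i).const_mul s)).stronglyMeasurable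
  have hYind : iIndepFun Y P :=
    hind.comp (fun _ x ↦ Real.exp (s * x)) fun _ ↦ Real.measurable_exp.comp (measurable_const_mul s)
  have hmart := hYind.martingale_prod_range_succ hY hmgf
  have hprod n ω : (∏ i ∈ range (n + 1), Y i) ω = Real.exp (s * ∑ i ∈ range (n + 1), X i ω) := by
    simp only [prod_apply, Y, mul_sum, Real.exp_sum]
  have hsub : {ω | ∃ n, ε ≤ ∑ i ∈ range n, X i ω}
      ⊆ {ω | ∃ n, Real.exp (s * ε) ≤ (∏ i ∈ range (n + 1), Y i) ω} := by
    rintro ω ⟨_ | n, hn⟩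
    · exact absurd hn (by simpa using hε)
    · exact ⟨n, by rw [hprod]; exact Real.exp_le_exp.mpr (mul_le_mul_of_nonneg_left hn hs.le)⟩
  calc P.real {ω | ∃ n, ε ≤ ∑ i ∈ range n, X i ω}
      ≤ P.real {ω | ∃ n, Real.exp (s * ε) ≤ (∏ i ∈ range (n + 1), Y i) ω} := measureReal_mono hsub
    _ ≤ P[∏ i ∈ range (0 + 1), Y i] / Real.exp (s * ε) :=
      hmart.measureReal_exists_le_le (fun n ω ↦ (Real.exp_pos _).le.trans_eq (hprod n ω).symm)
        (Real.exp_pos _)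
    _ = Real.exp (-(s * ε)) := by simp [Y, hmgf, Real.exp_neg]

end ProbabilityTheory

theorem stmt9_general {Ω : Type*} [MeasurableSpace Ω] (P : Measure Ω) [IsProbabilityMeasure P]
    (X : ℕ → Ω → ℝ) (hmeas : ∀ n, Measurable (X n))
    (hindep : iIndepFun X P)
    (hident : ∀ n, IdentDistrib (X n) (X 0) P P)
    (s : ℝ) (hs : 0 < s) (hmgf : ∫ ω, Real.exp (s * X 0 ω) ∂P = 1)
    (ε : ℝ) (hε : 0 < ε)
    (S : ℕ → Ω → ℝ) (hS : ∀ n ω, S n ω = ∑ i ∈ Finset.range n, X i ω)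
    (J : Ω → ℕ) :
    (P {ω | ε ≤ S (J ω) ω}).toReal ≤ Real.exp (-(s * ε)) := by
  have hsub : {ω | ε ≤ S (J ω) ω} ⊆ {ω | ∃ n, ε ≤ ∑ i ∈ Finset.range n, X i ω} :=
    fun ω hω ↦ ⟨J ω, hS (J ω) ω ▸ hω⟩
  have hmgf_eq n : ∫ ω, Real.exp (s * X n ω) ∂P = 1 :=
    ((hident n).comp (Real.measurable_exp.comp (measurable_const_mul s))).integral_eq.trans hmgf
  rw [← measureReal_def]
  exact (measureReal_mono hsub).trans <|
    hindep.measureReal_exists_le_sum_range_le_exp hmeas hs hmgf_eq hε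

/-- Wald's identity corollary: for i.i.d. real random variables `X₁, X₂, ...` with
`E[X] < 0` and a point `s* > 0` where the log-MGF vanishes (i.e. `E[e^{s*X}] = 1`),
letting `Sₙ = X₁ + ... + Xₙ` and `J` the first `n` with `Sₙ ≥ ε` or `Sₙ ≤ β`
(for fixed `ε > 0`, `β < 0`), we have `P(S_J ≥ ε) ≤ e^{-s*·ε}`. -/
theorem stmt9 {Ω : Type*} [MeasurableSpace Ω] (P : Measure Ω) [IsProbabilityMeasure P]
    (X : ℕ → Ω → ℝ) (hmeas : ∀ n, Measurable (X n))
    (hindep : iIndepFun X P)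
    (hident : ∀ n, IdentDistrib (X n) (X 0) P P)
    (hint : Integrable (X 0) P) (hneg : ∫ ω, X 0 ω ∂P < 0)
    (s : ℝ) (hs : 0 < s) (hmgf : ∫ ω, Real.exp (s * X 0 ω) ∂P = 1)
    (ε β : ℝ) (hε : 0 < ε) (hβ : β < 0)
    (S : ℕ → Ω → ℝ) (hS : ∀ n ω, S n ω = ∑ i ∈ Finset.range n, X i ω)
    (J : Ω → ℕ) (hJ : ∀ ω, J ω = sInf {n | ε ≤ S n ω ∨ S n ω ≤ β}) :
    (P {ω | ε ≤ S (J ω) ω}).toReal ≤ Real.exp (-(s * ε)) :=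
  stmt9_general P X hmeas hindep hident s hs hmgf ε hε S hS J
end
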